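/- arXiv:2205.10836 — 2 statements merged into one kernel-verified Lean document; each statement's English description precedes it below -/
import Mathlib

section
/- Let n >= 3 and let k >= n be an integer. Consider the fair-goods instance with n agents and kn + 1 goods e_1, ..., e_{kn+1} where: for each agent i with 1 <= i <= n-2, v_i(e_j) = 1/(nk) for 1 <= j <= kn and v_i(e_{kn+1}) = 0; and for agents i in {n-1, n}, v_i(e_j) = 1/(k n^{k+1}) for 1 <= j <= kn and v_i(e_{kn+1}) = 1 - 1/n^k. Then OPT_E >= (kn - n + 2)/(k n^{k+1}), while every connected MMS allocation A satisfies EW(A) <= 2/n^{k+1}. Consequently the price of MMS with respect to egalitarian welfare for goods is at least (kn - n + 2)/(2k), which tends to n/2 as k tends to infinity. -/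
open Finset

noncomputable section

/-- The value of a bundle `S` of items under additive (item-level) valuation `v`. -/
def bundleVal {m : ℕ} (v : Fin m → ℝ) (S : Finset (Fin m)) : ℝ := ∑ e ∈ S, v e

/-- A bundle is connected if it is an interval of the line `e_1, …, e_m`. -/
def IsConnBundle {m : ℕ} (S : Finset (Fin m)) : Prop :=
  ∀ a ∈ S, ∀ c ∈ S, ∀ b : Fin m, a ≤ b → b ≤ c → b ∈ S

/-- A connected allocation: pairwise disjoint connected bundles covering all items. -/
def ConnAlloc (n m : ℕ) (A : Fin n → Finset (Fin m)) : Prop :=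
  (∀ i, IsConnBundle (A i)) ∧
  (∀ i j : Fin n, i ≠ j → Disjoint (A i) (A j)) ∧
  (∀ e : Fin m, ∃ i, e ∈ A i)

/-- The maximin share of an agent with valuation `v`: the maximum over connected
`n`-partitions of the minimum bundle value. -/
def mmsVal (n m : ℕ) (v : Fin m → ℝ) : ℝ :=
  sSup { x : ℝ | ∃ A : Fin n → Finset (Fin m), ConnAlloc n m A ∧ x = ⨅ j, bundleVal v (A j) }

/-- Utilitarian welfare of an allocation. -/
def utilW (n m : ℕ) (v : Fin n → Fin m → ℝ) (A : Fin n → Finset (Fin m)) : ℝ :=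
  ∑ i, bundleVal (v i) (A i)

/-- Egalitarian welfare of an allocation. -/
def egalW (n m : ℕ) (v : Fin n → Fin m → ℝ) (A : Fin n → Finset (Fin m)) : ℝ :=
  ⨅ i, bundleVal (v i) (A i)

/-- Optimal utilitarian welfare over all connected allocations. -/
def optU (n m : ℕ) (v : Fin n → Fin m → ℝ) : ℝ :=
  sSup { x : ℝ | ∃ A, ConnAlloc n m A ∧ x = utilW n m v A }

/-- Optimal egalitarian welfare over all connected allocations. -/
def optE (n m : ℕ) (v : Fin n → Fin m → ℝ) : ℝ :=
  sSup { x : ℝ | ∃ A, ConnAlloc n m A ∧ x = egalW n m v A }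

/-! Giving each of the first `n - 2` agents a single cheap good, agent `n - 1` the remaining cheap
goods and agent `n` the expensive good `e_{kn+1}` guarantees everybody `(kn - n + 2)/(k n^(k+1))`.
Conversely, cutting the line into `n` blocks of `k` cheap goods shows that each of the first
`n - 2` agents has maximin share `1 / n`, so in an MMS allocation these agents consume at least
`(n - 2) k` of the `kn` cheap goods. One of the last two agents misses `e_{kn+1}` and is left with
at most `2k` cheap goods, worth at most `2 / n^(k+1)` to it. -/

section Allocations

variable {n m : ℕ}

lemma bundleVal_mono {v : Fin m → ℝ} (hv : ∀ j, 0 ≤ v j) {S T : Finset (Fin m)} (h : S ⊆ T) :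
    bundleVal v S ≤ bundleVal v T :=
  sum_le_sum_of_subset_of_nonneg h fun j _ _ => hv j

lemma single_le_bundleVal {v : Fin m → ℝ} (hv : ∀ j, 0 ≤ v j) {S : Finset (Fin m)} {j : Fin m}
    (hj : j ∈ S) : v j ≤ bundleVal v S :=
  single_le_sum (fun j _ => hv j) hj

lemma sum_bundleVal_le {v : Fin m → ℝ} (hv : ∀ j, 0 ≤ v j) {A : Fin n → Finset (Fin m)}
    (hA : ∀ i j, i ≠ j → Disjoint (A i) (A j)) (s : Finset (Fin n)) :
    ∑ i ∈ s, bundleVal v (A i) ≤ bundleVal v univ := by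
  classical
  simp only [bundleVal]
  rw [← sum_biUnion fun i _ j _ hij => hA i j hij]
  exact bundleVal_mono hv (subset_univ _)

lemma exists_last_notMem_of_two_le (hn : 2 ≤ n) {A : Fin n → Finset (Fin (m + 1))}
    (hA : ∀ i j, i ≠ j → Disjoint (A i) (A j)) :
    ∃ t : Fin n, n - 2 ≤ (t : ℕ) ∧ Fin.last m ∉ A t := by
  by_cases h : Fin.last m ∈ A ⟨n - 2, by omega⟩
  · refine ⟨⟨n - 1, by omega⟩, by simp only; omega, disjoint_left.1 (hA _ _ ?_) h⟩
    simp only [ne_eq, Fin.mk.injEq]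
    omega
  · exact ⟨_, le_rfl, h⟩

lemma egalW_le_bundleVal (v : Fin n → Fin m → ℝ) (A : Fin n → Finset (Fin m)) (i : Fin n) :
    egalW n m v A ≤ bundleVal (v i) (A i) :=
  ciInf_le (Finite.bddBelow_range _) i

lemma le_egalW [NeZero n] {v : Fin n → Fin m → ℝ} {A : Fin n → Finset (Fin m)} {x : ℝ}
    (h : ∀ i, x ≤ bundleVal (v i) (A i)) : x ≤ egalW n m v A :=
  le_ciInf h

lemma egalW_le_optE [NeZero n] {v : Fin n → Fin m → ℝ} (hv : ∀ i j, 0 ≤ v i j)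
    {A : Fin n → Finset (Fin m)} (hA : ConnAlloc n m A) : egalW n m v A ≤ optE n m v := by
  refine le_csSup ⟨bundleVal (v 0) univ, ?_⟩ ⟨A, hA, rfl⟩
  rintro _ ⟨B, -, rfl⟩
  exact (egalW_le_bundleVal v B 0).trans (bundleVal_mono (hv 0) (subset_univ _))

lemma iInf_bundleVal_le_mmsVal [NeZero n] {v : Fin m → ℝ} (hv : ∀ j, 0 ≤ v j)
    {A : Fin n → Finset (Fin m)} (hA : ConnAlloc n m A) :
    ⨅ i, bundleVal v (A i) ≤ mmsVal n m v := by
  refine le_csSup ⟨bundleVal v univ, ?_⟩ ⟨A, hA, rfl⟩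
  rintro _ ⟨B, -, rfl⟩
  exact (ciInf_le (Finite.bddBelow_range _) 0).trans (bundleVal_mono hv (subset_univ _))

def cutAlloc (n m : ℕ) (c : ℕ → ℕ) : Fin n → Finset (Fin m) :=
  fun i => {j | c i ≤ (j : ℕ) ∧ (j : ℕ) < c (i + 1)}

lemma mem_cutAlloc {c : ℕ → ℕ} {i : Fin n} {j : Fin m} :
    j ∈ cutAlloc n m c i ↔ c i ≤ (j : ℕ) ∧ (j : ℕ) < c (i + 1) := by
  simp [cutAlloc]

lemma card_cutAlloc {c : ℕ → ℕ} {i : Fin n} (hc : c (i + 1) ≤ m) :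
    #(cutAlloc n m c i) = c (i + 1) - c i := by
  rw [← card_map Fin.valEmbedding, ← Nat.card_Ico]
  congr 1
  ext x
  simp only [mem_map, mem_cutAlloc, Fin.valEmbedding_apply, mem_Ico]
  exact ⟨fun ⟨j, hj, hjx⟩ => hjx ▸ hj, fun hx => ⟨⟨x, by omega⟩, hx, rfl⟩⟩

lemma connAlloc_cutAlloc {c : ℕ → ℕ} (hc : Monotone c) (h0 : c 0 = 0) (hm : m ≤ c n) :
    ConnAlloc n m (cutAlloc n m c) := by
  refine ⟨fun i a ha b hb j haj hjb => ?_, fun i i' hii' => ?_, fun j => ?_⟩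
  · rw [mem_cutAlloc] at *
    exact ⟨ha.1.trans haj, lt_of_le_of_lt hjb hb.2⟩
  · rw [disjoint_left]
    intro j hj hj'
    rw [mem_cutAlloc] at hj hj'
    rcases lt_or_gt_of_ne hii' with h | h
    · have := hc (show (i : ℕ) + 1 ≤ i' from h); omega
    · have := hc (show (i' : ℕ) + 1 ≤ i from h); omega
  · have hex : ∃ i, (j : ℕ) < c i := ⟨n, lt_of_lt_of_le j.isLt hm⟩
    have hpos : 0 < Nat.find hex := (Nat.find_pos hex).2 (by simp [h0])
    have hle : Nat.find hex ≤ n := Nat.find_min' hex (lt_of_lt_of_le j.isLt hm)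
    refine ⟨⟨Nat.find hex - 1, by omega⟩, mem_cutAlloc.2 ⟨?_, ?_⟩⟩
    · exact not_lt.1 (Nat.find_min hex (show Nat.find hex - 1 < Nat.find hex by omega))
    · simpa [Nat.sub_add_cancel hpos] using Nat.find_spec hex

end Allocations

lemma mul_le_pow_of_two_le {n k : ℕ} (hn : 2 ≤ n) (hk : 0 < k) : k * n ≤ n ^ k := by
  obtain ⟨k, rfl⟩ := Nat.exists_eq_add_of_lt hk
  calc (0 + k + 1) * n ≤ n ^ k * n := Nat.mul_le_mul_right n (by simpa using Nat.lt_pow_self hn)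
    _ = n ^ (0 + k + 1) := by rw [zero_add, pow_succ]

section Instance

variable {n k : ℕ}

def typeOneVal (n k : ℕ) : Fin (k * n + 1) → ℝ :=
  fun j => if (j : ℕ) < k * n then 1 / ((n : ℝ) * k) else 0

def typeTwoVal (n k : ℕ) : Fin (k * n + 1) → ℝ :=
  fun j => if (j : ℕ) < k * n then 1 / ((k : ℝ) * (n : ℝ) ^ (k + 1)) else 1 - 1 / (n : ℝ) ^ k

lemma typeOneVal_nonneg (j : Fin (k * n + 1)) : 0 ≤ typeOneVal n k j := by
  unfold typeOneVal
  split_ifs <;> positivity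

lemma typeTwoVal_nonneg (hn : 0 < n) (j : Fin (k * n + 1)) : 0 ≤ typeTwoVal n k j := by
  unfold typeTwoVal
  split_ifs
  · positivity
  · have : (1 : ℝ) ≤ (n : ℝ) ^ k := one_le_pow₀ (by exact_mod_cast hn)
    exact sub_nonneg.2 (div_le_one_of_le₀ this (by positivity))

lemma typeTwoVal_eq_div {j : Fin (k * n + 1)} (hj : (j : ℕ) < k * n) :
    typeTwoVal n k j = typeOneVal n k j / (n : ℝ) ^ k := by
  simp only [typeOneVal, typeTwoVal, if_pos hj]
  rw [pow_succ, div_div]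
  ring

lemma bundleVal_typeOneVal_of_lt {B : Finset (Fin (k * n + 1))} (hB : ∀ j ∈ B, (j : ℕ) < k * n) :
    bundleVal (typeOneVal n k) B = #B / ((n : ℝ) * k) := by
  rw [bundleVal, sum_eq_card_nsmul (f := typeOneVal n k) (b := 1 / ((n : ℝ) * k))
    fun j hj => if_pos (hB j hj), nsmul_eq_mul, mul_one_div]

lemma bundleVal_typeTwoVal_of_lt {B : Finset (Fin (k * n + 1))} (hB : ∀ j ∈ B, (j : ℕ) < k * n) :
    bundleVal (typeTwoVal n k) B = bundleVal (typeOneVal n k) B / (n : ℝ) ^ k := by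
  rw [bundleVal, bundleVal, sum_div]
  exact sum_congr rfl fun j hj => typeTwoVal_eq_div (hB j hj)

lemma bundleVal_typeOneVal_univ (hn : 0 < n) (hk : 0 < k) :
    bundleVal (typeOneVal n k) univ = 1 := by
  rw [bundleVal, Fin.sum_univ_castSucc]
  simp only [typeOneVal, Fin.val_castSucc, Fin.is_lt, ↓reduceIte, sum_const, card_univ,
    Fintype.card_fin, nsmul_eq_mul, Nat.cast_mul, Fin.val_last, lt_self_iff_false, add_zero]
  field_simp

lemma one_div_le_mmsVal_typeOneVal [NeZero n] (hk : 0 < k) :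
    1 / (n : ℝ) ≤ mmsVal n (k * n + 1) (typeOneVal n k) := by
  set c : ℕ → ℕ := fun i => if i < n then k * i else k * i + 1 with hc_def
  have hc : Monotone c := fun i i' h => by
    have := Nat.mul_le_mul_left k h
    simp only [hc_def]
    split_ifs <;> omega
  refine le_trans (le_ciInf fun i => ?_) (iInf_bundleVal_le_mmsVal typeOneVal_nonneg
    (connAlloc_cutAlloc hc (by simp [hc_def, NeZero.pos n]) (by simp [hc_def])))
  -- the `i`-th block contains the goods `k i, …, k i + k - 1`, worth `1 / n` in total
  have hblock : k * ((i : ℕ) + 1) ≤ k * n := Nat.mul_le_mul_left k i.isLt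
  have hlt : ∀ j ∈ cutAlloc n (k * n + 1) (k * ·) i, (j : ℕ) < k * n := fun j hj =>
    lt_of_lt_of_le (mem_cutAlloc.1 hj).2 hblock
  have hsub : cutAlloc n (k * n + 1) (k * ·) i ⊆ cutAlloc n (k * n + 1) c i := fun j hj => by
    rw [mem_cutAlloc] at hj ⊢
    simp only [hc_def, if_pos i.isLt]
    split_ifs <;> omega
  calc 1 / (n : ℝ) = bundleVal (typeOneVal n k) (cutAlloc n (k * n + 1) (k * ·) i) := by
        rw [bundleVal_typeOneVal_of_lt hlt, card_cutAlloc (by omega), mul_add, mul_one,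
          Nat.add_sub_cancel_left]
        field_simp
    _ ≤ _ := bundleVal_mono typeOneVal_nonneg hsub

def optEBound (n k : ℕ) : ℝ := ((k : ℝ) * n - n + 2) / ((k : ℝ) * (n : ℝ) ^ (k + 1))

-- Agents `0, …, n - 3` (zero-based) get one cheap good each, agent `n - 2` the remaining
-- cheap goods and agent `n - 1` the expensive good.
def optCut (n k : ℕ) : ℕ → ℕ := fun i => if i < n - 1 then i else k * n + (i + 1 - n)

lemma connAlloc_optCut (hn : 2 ≤ n) (hk : 0 < k) :
    ConnAlloc n (k * n + 1) (cutAlloc n (k * n + 1) (optCut n k)) := by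
  have hkn : n ≤ k * n := Nat.le_mul_of_pos_left n hk
  refine connAlloc_cutAlloc (fun i i' h => ?_) ?_ ?_ <;>
    · simp only [optCut]
      split_ifs <;> omega

lemma optEBound_le_one_div (hn : 2 ≤ n) (hk : 0 < k) :
    optEBound n k ≤ 1 / ((n : ℝ) * k) := by
  have hN : (2 : ℝ) ≤ n := by exact_mod_cast hn
  have hpow : (k : ℝ) * n ≤ (n : ℝ) ^ k := by exact_mod_cast mul_le_pow_of_two_le hn hk
  have hnum : (k : ℝ) * n - n + 2 ≤ (n : ℝ) ^ k := by linarith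
  rw [optEBound, div_le_div_iff₀ (by positivity) (by positivity), pow_succ]
  nlinarith [mul_le_mul_of_nonneg_right hnum (by positivity : (0 : ℝ) ≤ n * k)]

lemma optEBound_le_typeTwoVal_last (hn : 2 ≤ n) (hk : 0 < k) :
    optEBound n k ≤ typeTwoVal n k (Fin.last (k * n)) := by
  have hN : (2 : ℝ) ≤ n := by exact_mod_cast hn
  have hK : (1 : ℝ) ≤ k := by exact_mod_cast hk
  have hpow : (2 : ℝ) ≤ (n : ℝ) ^ k := le_self_pow₀ (by linarith) hk.ne' |>.trans' hN
  have h1 : 1 / ((n : ℝ) * k) ≤ 1 / 2 := one_div_le_one_div_of_le (by norm_num) (by nlinarith)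
  have h2 : 1 / (n : ℝ) ^ k ≤ 1 / 2 := one_div_le_one_div_of_le (by norm_num) hpow
  simp only [typeTwoVal, Fin.val_last, lt_self_iff_false, if_false]
  linarith [optEBound_le_one_div hn hk]

lemma optEBound_le_bundleVal_optCut (hn : 2 ≤ n) (hk : 0 < k) {v : Fin n → Fin (k * n + 1) → ℝ}
    (h1 : ∀ i : Fin n, (i : ℕ) < n - 2 → v i = typeOneVal n k)
    (h2 : ∀ i : Fin n, n - 2 ≤ (i : ℕ) → v i = typeTwoVal n k) (i : Fin n) :
    optEBound n k ≤ bundleVal (v i) (cutAlloc n (k * n + 1) (optCut n k) i) := by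
  have hkn : n ≤ k * n := Nat.le_mul_of_pos_left n hk
  rcases lt_trichotomy (i : ℕ) (n - 2) with hi | hi | hi
  · have hmem : (⟨i, by omega⟩ : Fin (k * n + 1)) ∈ cutAlloc n (k * n + 1) (optCut n k) i := by
      simp only [mem_cutAlloc, optCut]
      split_ifs <;> omega
    rw [h1 i hi]
    refine (optEBound_le_one_div hn hk).trans
      (le_of_eq_of_le ?_ (single_le_bundleVal typeOneVal_nonneg hmem))
    exact (if_pos (show (i : ℕ) < k * n by omega)).symm
  · have hlt : ∀ j ∈ cutAlloc n (k * n + 1) (optCut n k) i, (j : ℕ) < k * n := fun j hj => by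
      simp only [mem_cutAlloc, optCut] at hj
      split_ifs at hj <;> omega
    have hcard : #(cutAlloc n (k * n + 1) (optCut n k) i) = k * n - (n - 2) := by
      rw [card_cutAlloc (by simp only [optCut]; split_ifs <;> omega)]
      simp only [optCut]
      split_ifs <;> omega
    rw [optEBound, h2 i hi.ge, bundleVal_typeTwoVal_of_lt hlt, bundleVal_typeOneVal_of_lt hlt, hcard,
      Nat.cast_sub (by omega), Nat.cast_sub hn, Nat.cast_mul, pow_succ]
    apply le_of_eq
    field_simp
    ring
  · have hmem : Fin.last (k * n) ∈ cutAlloc n (k * n + 1) (optCut n k) i := by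
      simp only [mem_cutAlloc, optCut, Fin.val_last]
      split_ifs <;> omega
    rw [h2 i hi.le]
    exact (optEBound_le_typeTwoVal_last hn hk).trans
      (single_le_bundleVal (typeTwoVal_nonneg (by omega)) hmem)

lemma le_optE_of_eq_typeVal (hn : 2 ≤ n) (hk : 0 < k) {v : Fin n → Fin (k * n + 1) → ℝ}
    (h1 : ∀ i : Fin n, (i : ℕ) < n - 2 → v i = typeOneVal n k)
    (h2 : ∀ i : Fin n, n - 2 ≤ (i : ℕ) → v i = typeTwoVal n k) :
    optEBound n k ≤ optE n (k * n + 1) v := by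
  have : NeZero n := ⟨by omega⟩
  have hv : ∀ i j, 0 ≤ v i j := fun i j => by
    rcases lt_or_ge (i : ℕ) (n - 2) with hi | hi
    · exact h1 i hi ▸ typeOneVal_nonneg j
    · exact h2 i hi ▸ typeTwoVal_nonneg (by omega) j
  exact (le_egalW (optEBound_le_bundleVal_optCut hn hk h1 h2)).trans
    (egalW_le_optE hv (connAlloc_optCut hn hk))

lemma sum_bundleVal_typeOneVal_le_of_mmsVal_le (hn : 2 ≤ n) (hk : 0 < k)
    {v : Fin n → Fin (k * n + 1) → ℝ} (h1 : ∀ i : Fin n, (i : ℕ) < n - 2 → v i = typeOneVal n k)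
    {A : Fin n → Finset (Fin (k * n + 1))} (hA : ConnAlloc n (k * n + 1) A)
    (hmms : ∀ i, mmsVal n (k * n + 1) (v i) ≤ bundleVal (v i) (A i)) :
    ∑ i ∈ {i : Fin n | n - 2 ≤ (i : ℕ)}, bundleVal (typeOneVal n k) (A i) ≤ 2 / n := by
  have : NeZero n := ⟨by omega⟩
  -- the agents `i < n - 2` each hold at least `1 / n` of a total value `1`
  have hfair : #{i : Fin n | (i : ℕ) < n - 2} • (1 / (n : ℝ)) ≤
      ∑ i ∈ {i : Fin n | (i : ℕ) < n - 2}, bundleVal (typeOneVal n k) (A i) :=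
    card_nsmul_le_sum _ _ _ fun i hi => by
      have hmms_i := hmms i
      rw [h1 i (mem_filter.1 hi).2] at hmms_i
      exact (one_div_le_mmsVal_typeOneVal hk).trans hmms_i
  have htotal := (sum_bundleVal_le typeOneVal_nonneg hA.2.1 univ).trans_eq
    (bundleVal_typeOneVal_univ (NeZero.pos n) hk)
  rw [← sum_filter_add_sum_filter_not univ fun i : Fin n => (i : ℕ) < n - 2] at htotal
  simp only [not_lt] at htotal
  rw [Fin.card_filter_val_lt, min_eq_right (by omega), nsmul_eq_mul, Nat.cast_sub hn,
    Nat.cast_ofNat] at hfair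
  have hN : (0 : ℝ) < n := by exact_mod_cast NeZero.pos n
  have : ((n : ℝ) - 2) * (1 / n) + 2 / n = 1 := by field_simp; ring
  linarith

lemma egalW_le_of_mmsVal_le (hn : 2 ≤ n) (hk : 0 < k) {v : Fin n → Fin (k * n + 1) → ℝ}
    (h1 : ∀ i : Fin n, (i : ℕ) < n - 2 → v i = typeOneVal n k)
    (h2 : ∀ i : Fin n, n - 2 ≤ (i : ℕ) → v i = typeTwoVal n k)
    {A : Fin n → Finset (Fin (k * n + 1))} (hA : ConnAlloc n (k * n + 1) A)
    (hmms : ∀ i, mmsVal n (k * n + 1) (v i) ≤ bundleVal (v i) (A i)) :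
    egalW n (k * n + 1) v A ≤ 2 / (n : ℝ) ^ (k + 1) := by
  obtain ⟨t, ht, hlast⟩ := exists_last_notMem_of_two_le hn hA.2.1
  have hlt : ∀ j ∈ A t, (j : ℕ) < k * n := fun j hj =>
    Fin.val_lt_last (ne_of_mem_of_not_mem hj hlast)
  have htT : t ∈ ({i | n - 2 ≤ (i : ℕ)} : Finset (Fin n)) := mem_filter.2 ⟨mem_univ t, ht⟩
  calc egalW n (k * n + 1) v A ≤ bundleVal (v t) (A t) := egalW_le_bundleVal v A t
    _ = bundleVal (typeOneVal n k) (A t) / (n : ℝ) ^ k := by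
        rw [h2 t ht, bundleVal_typeTwoVal_of_lt hlt]
    _ ≤ (2 / n) / (n : ℝ) ^ k := by
        gcongr
        exact (single_le_sum (fun i _ => sum_nonneg fun j _ => typeOneVal_nonneg j) htT).trans
          (sum_bundleVal_typeOneVal_le_of_mmsVal_le hn hk h1 hA hmms)
    _ = 2 / (n : ℝ) ^ (k + 1) := by rw [pow_succ, div_div, mul_comm]

end Instance

/-- The hard instance for Goods | Egalitarian | MMS: with `n ≥ 3` agents
and `kn + 1` goods as described (`k ≥ n`), the optimal egalitarian welfare is at least
`(kn - n + 2)/(k·n^(k+1))`, while every connected MMS allocation has egalitarian welfare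
at most `2 / n^(k+1)`. -/
theorem goods_egalitarian_mms_lower_bound (n k : ℕ) (hn : 3 ≤ n) (hk : n ≤ k)
    (v : Fin n → Fin (k * n + 1) → ℝ)
    (hv1 : ∀ i : Fin n, (i : ℕ) < n - 2 → ∀ j : Fin (k * n + 1),
      v i j = if (j : ℕ) < k * n then 1 / ((n : ℝ) * k) else 0)
    (hv2 : ∀ i : Fin n, n - 2 ≤ (i : ℕ) → ∀ j : Fin (k * n + 1),
      v i j = if (j : ℕ) < k * n then 1 / ((k : ℝ) * (n : ℝ) ^ (k + 1))
              else 1 - 1 / (n : ℝ) ^ k) :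
    ((k : ℝ) * n - n + 2) / ((k : ℝ) * (n : ℝ) ^ (k + 1)) ≤ optE n (k * n + 1) v ∧
    ∀ A : Fin n → Finset (Fin (k * n + 1)), ConnAlloc n (k * n + 1) A →
      (∀ i, mmsVal n (k * n + 1) (v i) ≤ bundleVal (v i) (A i)) →
      egalW n (k * n + 1) v A ≤ 2 / (n : ℝ) ^ (k + 1) := by
  have h1 : ∀ i : Fin n, (i : ℕ) < n - 2 → v i = typeOneVal n k := fun i hi => funext (hv1 i hi)
  have h2 : ∀ i : Fin n, n - 2 ≤ (i : ℕ) → v i = typeTwoVal n k := fun i hi => funext (hv2 i hi)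
  exact ⟨le_optE_of_eq_typeVal (by omega) (by omega) h1 h2,
    fun A hA hmms => egalW_le_of_mmsVal_le (by omega) (by omega) h1 h2 hA hmms⟩
end
end

section
/- Let n >= 3. Consider the fair-chores instance with n agents and 3n - 2 chores e_1, ..., e_{3n-2} where: agent 1 has v_1(e_j) = -1/n^2 for 1 <= j <= 2n and v_1(e_j) = -1/n for 2n+1 <= j <= 3n-2; and every agent i >= 2 has v_i(e_j) = -1/(2n) for 1 <= j <= 2n and v_i(e_j) = 0 for 2n+1 <= j <= 3n-2. Then OPT_U >= -2/n, while every connected MMS allocation A satisfies UW(A) <= -1/n - 1/2. Hence the price of MMS with respect to utilitarian welfare for chores is at least 1/2 + n/4 = Omega(n). -/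
/-!
Giving agent 1 the `2n` small chores and every other agent at most one of the large chores,
which are worthless to them, has welfare `-2/n`. Agent 1 can cut the line into two bundles of
`n` small chores and `n - 2` single large chores, so `MMS₁ ≥ -1/n`. Every chore satisfies
`v₁ - vᵢ ≤ -((n - 2) / 2) v₁` for `i ≥ 2`, and the other agents, who share one valuation of
total `-1`, receive everything outside `A₁`; so in an MMS allocation, where `v₁(A₁) ≥ -1/n`,
the welfare is `v₁(A₁) - vᵢ(A₁) - 1 ≤ -((n - 2) / 2) v₁(A₁) - 1 ≤ (n - 2) / (2n) - 1`.
-/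

open Finset

noncomputable section

section General

variable {n m : ℕ}

lemma sum_ite_val_lt {k : ℕ} (hk : k ≤ m) (c : ℝ) :
    ∑ e : Fin m, (if (e : ℕ) < k then c else 0) = k * c := by
  rw [Fin.sum_univ_eq_sum_range (fun i => if i < k then c else 0), ← sum_range_add_sum_Ico _ hk,
    sum_congr rfl fun i hi => if_pos (mem_range.mp hi),
    sum_congr rfl fun i hi => if_neg (not_lt.mpr (mem_Ico.mp hi).1)]
  simp

lemma neg_mul_le_bundleVal {v : Fin m → ℝ} {S : Finset (Fin m)} {c : ℝ} {k : ℕ}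
    (hc : 0 ≤ c) (hS : #S ≤ k) (hv : ∀ e ∈ S, -c ≤ v e) : -(k * c) ≤ bundleVal v S :=
  calc -(k * c) ≤ #S • -c := by rw [nsmul_eq_mul, mul_neg, neg_le_neg_iff]; gcongr
    _ ≤ bundleVal v S := card_nsmul_le_sum S v (-c) hv

lemma card_le_of_forall_mem_Ico {S : Finset (Fin m)} {a k : ℕ}
    (hS : ∀ e ∈ S, a ≤ (e : ℕ) ∧ (e : ℕ) < a + k) : #S ≤ k := by
  simpa using card_le_card_of_injOn (fun e : Fin m => (e : ℕ) - a) (t := range k)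
    (fun e he => by simp only [coe_range, Set.mem_Iio]; have := hS e he; omega)
    (fun e he e' he' h => by have := hS e he; have := hS e' he'; simp only at h; omega)

lemma ConnAlloc.sum_bundleVal {A : Fin n → Finset (Fin m)} (hA : ConnAlloc n m A)
    (w : Fin m → ℝ) : ∑ i, bundleVal w (A i) = ∑ e, w e := by
  classical
  have hcover : (univ : Finset (Fin m)) = univ.biUnion A := by
    ext e
    simpa using hA.2.2 e
  rw [hcover, sum_biUnion fun i _ j _ hij => hA.2.1 i j hij]
  rfl

lemma utilW_eq_of_forall_ne_eq {v : Fin n → Fin m → ℝ} {A : Fin n → Finset (Fin m)}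
    (hA : ConnAlloc n m A) {i₀ : Fin n} {w : Fin m → ℝ} (hw : ∀ i ≠ i₀, v i = w) :
    utilW n m v A = bundleVal (v i₀) (A i₀) - bundleVal w (A i₀) + ∑ e, w e := by
  rw [utilW, ← hA.sum_bundleVal w, ← add_sum_erase _ _ (mem_univ i₀),
    ← add_sum_erase _ (fun i => bundleVal w (A i)) (mem_univ i₀),
    sum_congr rfl fun i hi => by rw [hw i (ne_of_mem_erase hi)]]
  ring

lemma utilW_le_optU {v : Fin n → Fin m → ℝ} (hv : ∀ i e, v i e ≤ 0)
    {A : Fin n → Finset (Fin m)} (hA : ConnAlloc n m A) : utilW n m v A ≤ optU n m v := by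
  refine le_csSup ⟨0, ?_⟩ ⟨A, hA, rfl⟩
  rintro _ ⟨B, -, rfl⟩
  exact sum_nonpos fun i _ => sum_nonpos fun e _ => hv i e

lemma le_mmsVal_of_forall_le [NeZero n] {v : Fin m → ℝ} (hv : ∀ e, v e ≤ 0)
    {A : Fin n → Finset (Fin m)} (hA : ConnAlloc n m A) {c : ℝ}
    (hc : ∀ j, c ≤ bundleVal v (A j)) : c ≤ mmsVal n m v := by
  refine le_csSup_of_le ⟨0, ?_⟩ ⟨A, hA, rfl⟩ (le_ciInf hc)
  rintro _ ⟨B, -, rfl⟩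
  exact (ciInf_le (Set.finite_range _).bddBelow 0).trans (sum_nonpos fun e _ => hv e)

def fiberAlloc (f : Fin m → Fin n) (i : Fin n) : Finset (Fin m) := univ.filter (f · = i)

lemma connAlloc_fiberAlloc {f : Fin m → Fin n} (hf : Monotone f) :
    ConnAlloc n m (fiberAlloc f) := by
  simp only [ConnAlloc, IsConnBundle, fiberAlloc, mem_filter, mem_univ, true_and]
  refine ⟨fun i a ha c hc b hab hbc => le_antisymm (hc ▸ hf hbc) (ha ▸ hf hab),
    fun i j hij => disjoint_filter.2 fun e _ hi hj => hij (hi ▸ hj), fun e => ⟨f e, rfl⟩⟩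

lemma utilW_fiberAlloc (v : Fin n → Fin m → ℝ) (f : Fin m → Fin n) :
    utilW n m v (fiberAlloc f) = ∑ e, v (f e) e := by
  rw [utilW, ← sum_fiberwise univ f fun e => v (f e) e]
  refine sum_congr rfl fun i _ => sum_congr rfl fun e he => ?_
  rw [(mem_filter.1 he).2]

end General

section HardInstance

variable {n : ℕ}

def agentOneVal (n : ℕ) (e : Fin (3 * n - 2)) : ℝ :=
  if (e : ℕ) < 2 * n then -(1 / (n : ℝ) ^ 2) else -(1 / (n : ℝ))

def otherAgentVal (n : ℕ) (e : Fin (3 * n - 2)) : ℝ :=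
  if (e : ℕ) < 2 * n then -(1 / (2 * (n : ℝ))) else 0

lemma neg_inv_le_agentOneVal (e : Fin (3 * n - 2)) : -(1 / (n : ℝ)) ≤ agentOneVal n e := by
  rcases n.eq_zero_or_pos with rfl | hn
  · simp [agentOneVal]
  have hn' : (1 : ℝ) ≤ n := by exact_mod_cast hn
  unfold agentOneVal
  split_ifs
  · rw [neg_le_neg_iff, div_le_div_iff_of_pos_left one_pos (by positivity) (by positivity)]
    nlinarith
  · rfl

lemma agentOneVal_nonpos (e : Fin (3 * n - 2)) : agentOneVal n e ≤ 0 := by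
  unfold agentOneVal; split_ifs <;> (rw [neg_nonpos]; positivity)

lemma otherAgentVal_nonpos (e : Fin (3 * n - 2)) : otherAgentVal n e ≤ 0 := by
  unfold otherAgentVal
  split_ifs
  · rw [neg_nonpos]; positivity
  · rfl

lemma sum_otherAgentVal (hn : 2 ≤ n) : ∑ e, otherAgentVal n e = -1 := by
  have hn' : (n : ℝ) ≠ 0 := by exact_mod_cast (by omega : n ≠ 0)
  simp only [otherAgentVal]
  rw [sum_ite_val_lt (by omega)]
  field_simp
  push_cast
  ring

def welfareOwner (n : ℕ) (e : Fin (3 * n - 2)) : Fin n :=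
  ⟨if (e : ℕ) < 2 * n then 0 else e + 1 - 2 * n, by have := e.isLt; split_ifs <;> omega⟩

def mmsOwner (n : ℕ) (e : Fin (3 * n - 2)) : Fin n :=
  ⟨if (e : ℕ) < n then 0 else if (e : ℕ) < 2 * n then 1 else e + 2 - 2 * n,
    by have := e.isLt; split_ifs <;> omega⟩

lemma welfareOwner_monotone : Monotone (welfareOwner n) := by
  intro a b hab
  rw [Fin.le_def] at hab ⊢
  simp only [welfareOwner]
  split_ifs <;> omega

lemma mmsOwner_monotone : Monotone (mmsOwner n) := by
  intro a b hab
  rw [Fin.le_def] at hab ⊢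
  simp only [mmsOwner]
  split_ifs <;> omega

lemma utilW_fiberAlloc_welfareOwner (hn : 2 ≤ n) {v : Fin n → Fin (3 * n - 2) → ℝ}
    (hv1 : ∀ i : Fin n, (i : ℕ) = 0 → v i = agentOneVal n)
    (hv2 : ∀ i : Fin n, (i : ℕ) ≠ 0 → v i = otherAgentVal n) :
    utilW n (3 * n - 2) v (fiberAlloc (welfareOwner n)) = -(2 / (n : ℝ)) := by
  have hn' : (n : ℝ) ≠ 0 := by exact_mod_cast (by omega : n ≠ 0)
  have hitem : ∀ e,
      v (welfareOwner n e) e = if (e : ℕ) < 2 * n then -(1 / (n : ℝ) ^ 2) else 0 := by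
    intro e
    by_cases he : (e : ℕ) < 2 * n
    · rw [hv1 _ (by simp [welfareOwner, he]), agentOneVal, if_pos he, if_pos he]
    · rw [hv2 _ (by simp only [welfareOwner, if_neg he]; omega), otherAgentVal, if_neg he,
        if_neg he]
  rw [utilW_fiberAlloc, sum_congr rfl fun e _ => hitem e, sum_ite_val_lt (by omega)]
  field_simp
  push_cast
  ring

lemma neg_inv_le_bundleVal_fiberAlloc_mmsOwner (j : Fin n) :
    -(1 / (n : ℝ)) ≤ bundleVal (agentOneVal n) (fiberAlloc (mmsOwner n) j) := by
  have hmem : ∀ e ∈ fiberAlloc (mmsOwner n) j,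
      (j : ℕ) = if (e : ℕ) < n then 0 else if (e : ℕ) < 2 * n then 1 else e + 2 - 2 * n := by
    intro e he
    rw [← (mem_filter.1 he).2]
    rfl
  by_cases hj : (j : ℕ) < 2
  · have hcard : #(fiberAlloc (mmsOwner n) j) ≤ n :=
      card_le_of_forall_mem_Ico (a := if (j : ℕ) = 0 then 0 else n) fun e he => by
        have := hmem e he; split_ifs at * <;> omega
    have hsmall : ∀ e ∈ fiberAlloc (mmsOwner n) j, -(1 / (n : ℝ) ^ 2) ≤ agentOneVal n e :=
      fun e he => by
        have := hmem e he
        rw [agentOneVal, if_pos (by split_ifs at this <;> omega)]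
    calc -(1 / (n : ℝ)) = -(n * (1 / (n : ℝ) ^ 2)) := by field_simp
      _ ≤ _ := neg_mul_le_bundleVal (by positivity) hcard hsmall
  · have hcard : #(fiberAlloc (mmsOwner n) j) ≤ 1 :=
      card_le_of_forall_mem_Ico (a := j + 2 * n - 2) fun e he => by
        have := hmem e he; split_ifs at * <;> omega
    calc -(1 / (n : ℝ)) = -((1 : ℕ) * (1 / (n : ℝ))) := by simp
      _ ≤ _ := neg_mul_le_bundleVal (by positivity) hcard fun e _ => neg_inv_le_agentOneVal e

lemma neg_inv_le_mmsVal_agentOneVal [NeZero n] :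
    -(1 / (n : ℝ)) ≤ mmsVal n (3 * n - 2) (agentOneVal n) :=
  le_mmsVal_of_forall_le agentOneVal_nonpos (connAlloc_fiberAlloc mmsOwner_monotone)
    neg_inv_le_bundleVal_fiberAlloc_mmsOwner

lemma bundleVal_agentOneVal_sub_otherAgentVal_le (hn : 2 ≤ n) {S : Finset (Fin (3 * n - 2))}
    (hS : -(1 / (n : ℝ)) ≤ bundleVal (agentOneVal n) S) :
    bundleVal (agentOneVal n) S - bundleVal (otherAgentVal n) S ≤ 1 / 2 - 1 / n := by
  have hn' : (2 : ℝ) ≤ n := by exact_mod_cast hn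
  have hitem : ∀ e, agentOneVal n e - otherAgentVal n e ≤ -((n - 2) / 2) * agentOneVal n e := by
    intro e
    unfold agentOneVal otherAgentVal
    split_ifs <;> (field_simp; linarith)
  calc bundleVal (agentOneVal n) S - bundleVal (otherAgentVal n) S
      ≤ -((n - 2) / 2) * bundleVal (agentOneVal n) S := by
        simp only [bundleVal]
        rw [← sum_sub_distrib, mul_sum]
        exact sum_le_sum fun e _ => hitem e
    _ ≤ -((n - 2) / 2) * -(1 / (n : ℝ)) := by
        rw [neg_mul, neg_mul, neg_le_neg_iff]
        exact mul_le_mul_of_nonneg_left hS (by linarith)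
    _ = 1 / 2 - 1 / n := by field_simp

end HardInstance

/-- The hard instance for Chores | Utilitarian | MMS: with `n ≥ 3`
agents and `3n - 2` chores as described, `OPT_U ≥ -2/n`, while every connected MMS
allocation has utilitarian welfare at most `-1/n - 1/2`. -/
theorem chores_utilitarian_mms_lower_bound (n : ℕ) (hn : 3 ≤ n)
    (v : Fin n → Fin (3 * n - 2) → ℝ)
    (hv1 : ∀ i : Fin n, (i : ℕ) = 0 → ∀ j : Fin (3 * n - 2),
      v i j = if (j : ℕ) < 2 * n then -(1 / (n : ℝ) ^ 2) else -(1 / (n : ℝ)))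
    (hv2 : ∀ i : Fin n, (i : ℕ) ≠ 0 → ∀ j : Fin (3 * n - 2),
      v i j = if (j : ℕ) < 2 * n then -(1 / (2 * (n : ℝ))) else 0) :
    -(2 / (n : ℝ)) ≤ optU n (3 * n - 2) v ∧
    ∀ A : Fin n → Finset (Fin (3 * n - 2)), ConnAlloc n (3 * n - 2) A →
      (∀ i, mmsVal n (3 * n - 2) (v i) ≤ bundleVal (v i) (A i)) →
      utilW n (3 * n - 2) v A ≤ -(1 / (n : ℝ)) - 1 / 2 := by
  have hn2 : 2 ≤ n := by omega
  have : NeZero n := ⟨by omega⟩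
  have hv₁ : ∀ i : Fin n, (i : ℕ) = 0 → v i = agentOneVal n :=
    fun i hi => funext (hv1 i hi)
  have hv₂ : ∀ i : Fin n, (i : ℕ) ≠ 0 → v i = otherAgentVal n :=
    fun i hi => funext (hv2 i hi)
  have hv_nonpos : ∀ i e, v i e ≤ 0 := fun i e => by
    by_cases hi : (i : ℕ) = 0
    · exact hv₁ i hi ▸ agentOneVal_nonpos e
    · exact hv₂ i hi ▸ otherAgentVal_nonpos e
  refine ⟨?_, fun A hA hmms => ?_⟩
  · rw [← utilW_fiberAlloc_welfareOwner hn2 hv₁ hv₂]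
    exact utilW_le_optU hv_nonpos (connAlloc_fiberAlloc welfareOwner_monotone)
  · let i₀ : Fin n := ⟨0, by omega⟩
    have hA₀ : -(1 / (n : ℝ)) ≤ bundleVal (agentOneVal n) (A i₀) := by
      have hmms₀ := hmms i₀
      rw [hv₁ i₀ rfl] at hmms₀
      exact neg_inv_le_mmsVal_agentOneVal.trans hmms₀
    rw [utilW_eq_of_forall_ne_eq hA (i₀ := i₀) fun i hi => hv₂ i fun h => hi (Fin.ext h),
      hv₁ i₀ rfl, sum_otherAgentVal hn2]
    linarith [bundleVal_agentOneVal_sub_otherAgentVal_le hn2 hA₀]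
end
end
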